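/- arXiv:2501.10603 — 6 statements merged into one kernel-verified Lean document; each statement's English description precedes it below -/
import Mathlib

section
/- Let x, y : Fin n → ℂ both be non-increasing with respect to the lexicographic order on ℂ, and suppose x is majorized by y (x ≺ y). Then there exists a finite list T₁, …, T_m of affine T-transform matrices such that the row vector x equals y multiplied on the right by the product T₁ ⋯ T_m, i.e., x = y ᵥ* (T₁ * ⋯ * T_m). -/
/-- The lexicographic order on ℂ. -/
def CLexLe (z₁ z₂ : ℂ) : Prop :=
  z₁.re < z₂.re ∨ (z₁.re = z₂.re ∧ z₁.im ≤ z₂.im)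

/-- A vector `x : Fin n → ℂ` is non-increasing w.r.t. the lexicographic order. -/
def NonIncreasing {n : ℕ} (x : Fin n → ℂ) : Prop :=
  ∀ i j : Fin n, i ≤ j → CLexLe (x j) (x i)

/-- Partial sum of the first `k` entries of `x`. -/
noncomputable def partialSum {n : ℕ} (x : Fin n → ℂ) (k : ℕ) : ℂ :=
  ∑ i ∈ Finset.univ.filter (fun i : Fin n => (i : ℕ) < k), x i

/-- Majorization: all proper partial sums are ≤ in the lexicographic order and
the total sums agree. -/
def Maj {n : ℕ} (x y : Fin n → ℂ) : Prop :=
  (∀ k : ℕ, 1 ≤ k → k ≤ n - 1 → CLexLe (partialSum x k) (partialSum y k)) ∧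
    (∑ i, x i) = ∑ i, y i

/-- An affine T-transform matrix: `T = β • 1 + (1 - β) • Q` where `β ∈ ℂ` and
`Q` is the permutation matrix of a transposition swapping two indices `i ≠ j`. -/
def IsAffineTTransform {n : ℕ} (T : Matrix (Fin n) (Fin n) ℂ) : Prop :=
  ∃ (β : ℂ) (i j : Fin n), i ≠ j ∧
    T = β • (1 : Matrix (Fin n) (Fin n) ℂ) + (1 - β) • ((Equiv.swap i j).permMatrix ℂ)

lemma vecMul_T {n : ℕ} (z : Fin n → ℂ) (β : ℂ) (i j : Fin n) :
    Matrix.vecMul z (β • (1 : Matrix (Fin n) (Fin n) ℂ)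
      + (1 - β) • ((Equiv.swap i j).permMatrix ℂ)) =
    fun k => β * z k + (1 - β) * z (Equiv.swap i j k) := by
  funext k
  simp only [Matrix.vecMul, dotProduct, Matrix.add_apply, Matrix.smul_apply,
    Matrix.one_apply, Equiv.Perm.permMatrix, PEquiv.toMatrix_apply, Equiv.toPEquiv_apply,
    Option.mem_def, Option.some.injEq, smul_eq_mul, mul_add, mul_ite, mul_one, mul_zero]
  rw [Finset.sum_add_distrib]
  congr 1
  · rw [Finset.sum_ite_eq' Finset.univ k (fun l => z l * β)]
    simp [mul_comm]
  · have h : ∀ l : Fin n, (Equiv.swap i j l = k) ↔ (l = Equiv.swap i j k) := by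
      intro l
      constructor
      · intro h; rw [← h, Equiv.swap_apply_self]
      · intro h; rw [h, Equiv.swap_apply_self]
    simp only [h]
    rw [Finset.sum_ite_eq' Finset.univ (Equiv.swap i j k) (fun l => z l * (1-β))]
    simp [mul_comm]

/-- Reachability by a finite sequence of affine T-transforms. -/
def Reach {n : ℕ} (z w : Fin n → ℂ) : Prop :=
  ∃ Ts : List (Matrix (Fin n) (Fin n) ℂ),
    (∀ T ∈ Ts, IsAffineTTransform T) ∧ w = Matrix.vecMul z Ts.prod

lemma reach_refl {n : ℕ} (z : Fin n → ℂ) : Reach z z :=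
  ⟨[], by simp, by simp [Matrix.vecMul_one]⟩

lemma reach_trans {n : ℕ} {z w v : Fin n → ℂ} (h1 : Reach z w) (h2 : Reach w v) :
    Reach z v := by
  obtain ⟨T1, hT1, he1⟩ := h1
  obtain ⟨T2, hT2, he2⟩ := h2
  refine ⟨T1 ++ T2, ?_, ?_⟩
  · intro T hT
    rcases List.mem_append.mp hT with h | h
    exacts [hT1 T h, hT2 T h]
  · rw [List.prod_append, ← Matrix.vecMul_vecMul, ← he1, ← he2]

lemma reach_step {n : ℕ} (z : Fin n → ℂ) (i j : Fin n) (hij : i ≠ j)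
    (hz : z i ≠ z j) (a : ℂ) :
    Reach z (Function.update (Function.update z i a) j (z i + z j - a)) := by
  set β : ℂ := (a - z j) / (z i - z j) with hβ
  refine ⟨[β • (1 : Matrix (Fin n) (Fin n) ℂ)
      + (1 - β) • ((Equiv.swap i j).permMatrix ℂ)], ?_, ?_⟩
  · intro T hT
    rw [List.mem_singleton] at hT
    exact ⟨β, i, j, hij, hT⟩
  · rw [List.prod_singleton, vecMul_T]
    funext k
    have hzij : z i - z j ≠ 0 := sub_ne_zero.mpr hz
    by_cases hk : k = j
    · subst hk
      rw [Function.update_self, Equiv.swap_apply_right, hβ]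
      field_simp
      ring
    · rw [Function.update_of_ne hk]
      by_cases hk' : k = i
      · subst hk'
        rw [Function.update_self, Equiv.swap_apply_left, hβ]
        field_simp
        ring
      · rw [Function.update_of_ne hk', Equiv.swap_apply_of_ne_of_ne hk' hk]
        ring

lemma sum_update2 {n : ℕ} (z : Fin n → ℂ) {i j : Fin n} (hij : i ≠ j) (a : ℂ) :
    ∑ k, Function.update (Function.update z i a) j (z i + z j - a) k = ∑ k, z k := by
  have hi : i ∈ Finset.univ \ {j} := by
    simp [Finset.mem_sdiff, hij]
  rw [Finset.sum_update_of_mem (Finset.mem_univ j),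
    Finset.sum_update_of_mem hi,
    Finset.sum_eq_sum_sdiff_singleton_add (Finset.mem_univ j) z,
    Finset.sum_eq_sum_sdiff_singleton_add hi z]
  ring

lemma eq_of_agree_off_single {n : ℕ} (z x : Fin n → ℂ) (i : Fin n)
    (h : ∀ k, k ≠ i → z k = x k) (hs : ∑ k, z k = ∑ k, x k) : z = x := by
  funext k
  by_cases hk : k = i
  · subst hk
    have h1 := Finset.add_sum_erase Finset.univ z (Finset.mem_univ k)
    have h2 := Finset.add_sum_erase Finset.univ x (Finset.mem_univ k)
    have h3 : ∑ l ∈ Finset.univ.erase k, z l = ∑ l ∈ Finset.univ.erase k, x l :=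
      Finset.sum_congr rfl fun l hl => h l (Finset.mem_erase.mp hl).1
    have := h1.trans (hs.trans h2.symm)
    rw [h3] at this
    exact add_right_cancel this
  · exact h k hk

lemma distinctify_aux {n : ℕ} : ∀ c : ℕ, ∀ (z : Fin n → ℂ) (D : Finset (Fin n)),
    Dᶜ.card = c → 2 ≤ D.card →
    (∀ a ∈ D, ∀ b ∈ D, z a = z b → a = b) →
    ∃ z' : Fin n → ℂ, Reach z z' ∧ Function.Injective z' ∧ ∑ k, z' k = ∑ k, z k := by
  intro c
  induction c with
  | zero =>
    intro z D hc h2 hinj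
    rw [Finset.card_eq_zero, Finset.compl_eq_empty_iff] at hc
    refine ⟨z, reach_refl z, ?_, rfl⟩
    intro a b hab
    exact hinj a (hc ▸ Finset.mem_univ a) b (hc ▸ Finset.mem_univ b) hab
  | succ c ih =>
    intro z D hc h2 hinj
    obtain ⟨k, hk⟩ : Dᶜ.Nonempty := Finset.card_pos.mp (by omega)
    have hkD : k ∉ D := Finset.mem_compl.mp hk
    have hcard : (insert k D)ᶜ.card = c := by
      rw [Finset.compl_insert, Finset.card_erase_of_mem hk, hc]
      omega
    have h2' : 2 ≤ (insert k D).card :=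
      le_trans h2 (Finset.card_le_card (Finset.subset_insert k D))
    by_cases hex : ∃ d ∈ D, z d = z k
    · obtain ⟨d₀, hd₀, hzd₀⟩ := hex
      obtain ⟨p, hp, hpd₀⟩ := Finset.exists_mem_ne (show 1 < D.card by omega) d₀
      have hkp : k ≠ p := fun h => hkD (h ▸ hp)
      have hzkp : z k ≠ z p := by
        intro h
        exact hpd₀ (hinj p hp d₀ hd₀ (by rw [← h, hzd₀]))
      obtain ⟨t, ht⟩ := Infinite.exists_notMem_finset
        ((D.image z) ∪ (D.image fun d => z k + z p - z d) ∪ {(z k + z p) / 2})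
      simp only [Finset.mem_union, Finset.mem_image, Finset.mem_singleton, not_or,
        not_exists, not_and] at ht
      obtain ⟨⟨ht1, ht2⟩, ht3⟩ := ht
      have ht1' : ∀ d ∈ D, t ≠ z d := fun d hd h => ht1 d hd h.symm
      have ht2' : ∀ d ∈ D, z k + z p - t ≠ z d := fun d hd h =>
        ht2 d hd (by linear_combination h)
      have ht3' : t ≠ z k + z p - t := fun h => ht3 (by linear_combination h / 2)
      set z1 := Function.update (Function.update z k t) p (z k + z p - t) with hz1
      have hr : Reach z z1 := reach_step z k p hkp hzkp t
      have hsum1 : ∑ l, z1 l = ∑ l, z l := sum_update2 z hkp t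
      have e1 : z1 k = t := by
        rw [hz1, Function.update_of_ne hkp, Function.update_self]
      have e2 : z1 p = z k + z p - t := by rw [hz1, Function.update_self]
      have e3 : ∀ d, d ≠ p → d ≠ k → z1 d = z d := fun d h1 h2 => by
        rw [hz1, Function.update_of_ne h1, Function.update_of_ne h2]
      have hinj1 : ∀ a ∈ insert k D, ∀ b ∈ insert k D, z1 a = z1 b → a = b := by
        intro a ha b hb hab
        rcases Finset.mem_insert.mp ha with rfl | haD <;>
          rcases Finset.mem_insert.mp hb with rfl | hbD
        · rfl
        · by_cases hbp : b = p
          · rw [e1, hbp, e2] at hab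
            exact absurd hab ht3'
          · rw [e1, e3 b hbp (fun h => hkD (h ▸ hbD))] at hab
            exact absurd hab (ht1' b hbD)
        · by_cases hap : a = p
          · rw [e1, hap, e2] at hab
            exact absurd hab.symm ht3'
          · rw [e1, e3 a hap (fun h => hkD (h ▸ haD))] at hab
            exact absurd hab.symm (ht1' a haD)
        · by_cases hap : a = p
          · by_cases hbp : b = p
            · rw [hap, hbp]
            · rw [hap, e2, e3 b hbp (fun h => hkD (h ▸ hbD))] at hab
              exact absurd hab (ht2' b hbD)
          · by_cases hbp : b = p
            · rw [hbp, e2, e3 a hap (fun h => hkD (h ▸ haD))] at hab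
              exact absurd hab.symm (ht2' a haD)
            · rw [e3 a hap (fun h => hkD (h ▸ haD)),
                e3 b hbp (fun h => hkD (h ▸ hbD))] at hab
              exact hinj a haD b hbD hab
      obtain ⟨z', hr', hinj', hsum'⟩ := ih z1 (insert k D) hcard h2' hinj1
      exact ⟨z', reach_trans hr hr', hinj', hsum'.trans hsum1⟩
    · push_neg at hex
      apply ih z (insert k D) hcard h2'
      intro a ha b hb hab
      rcases Finset.mem_insert.mp ha with rfl | haD <;>
        rcases Finset.mem_insert.mp hb with rfl | hbD
      · rfl
      · exact absurd hab.symm (hex b hbD)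
      · exact absurd hab (hex a haD)
      · exact hinj a haD b hbD hab

lemma fixTail {n : ℕ} (x : Fin n → ℂ) :
    ∀ d : ℕ, d ≤ n → ∀ z : Fin n → ℂ,
    (∀ k : Fin n, (k : ℕ) < n - d → z k = x k) →
    (∑ k, z k = ∑ k, x k) →
    (∀ a b : Fin n, n - d ≤ (a : ℕ) → n - d ≤ (b : ℕ) → z a = z b → a = b) →
    Reach z x := by
  intro d
  induction d with
  | zero =>
    intro _ z hpre _ _
    have : z = x := funext fun k => hpre k (by omega)
    rw [this]; exact reach_refl x
  | succ d ih =>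
    intro hdn z hpre hsum hinj
    have hn1 : n - (d + 1) < n := by omega
    set i : Fin n := ⟨n - (d + 1), hn1⟩ with hidef
    rcases Nat.lt_or_ge d 1 with hd | hd
    · -- d = 0 : only the last entry may differ, forced by the sum
      have hd0 : d = 0 := by omega
      subst hd0
      have hzx : z = x := by
        refine eq_of_agree_off_single z x i (fun k hk => hpre k ?_) hsum
        have hki : (k : ℕ) ≠ n - 1 := by
          intro h; exact hk (Fin.ext (by simpa [hidef] using h))
        have := k.isLt
        omega
      rw [hzx]; exact reach_refl x
    · have hj' : n - (d + 1) + 1 < n := by omega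
      set j : Fin n := ⟨n - (d + 1) + 1, hj'⟩ with hjdef
      have hij : i ≠ j := by
        intro h
        have := congrArg Fin.val h
        simp only [hidef, hjdef] at this
        omega
      have hitail : n - (d + 1) ≤ (i : ℕ) := le_of_eq rfl
      have hjtail : n - (d + 1) ≤ (j : ℕ) := by simp [hjdef]
      rcases Nat.lt_or_ge d 2 with hd1 | hd2
      · -- d = 1 : last two entries; one transform finishes
        have hd1' : d = 1 := by omega
        subst hd1'
        have hzij : z i ≠ z j := fun h => hij (hinj i j hitail hjtail h)
        have hstep := reach_step z i j hij hzij (x i)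
        set z1 := Function.update (Function.update z i (x i)) j (z i + z j - x i) with hz1
        have hz1x : z1 = x := by
          refine eq_of_agree_off_single z1 x j ?_ ((sum_update2 z hij (x i)).trans hsum)
          intro k hk
          by_cases hki : k = i
          · rw [hki, hz1, Function.update_of_ne hij, Function.update_self]
          · rw [hz1, Function.update_of_ne hk, Function.update_of_ne hki]
            refine hpre k ?_
            have h1 : (k : ℕ) ≠ n - 2 := by
              intro h; exact hki (Fin.ext (by simpa [hidef] using h))
            have h2 : (k : ℕ) ≠ n - 2 + 1 := by
              intro h; exact hk (Fin.ext (by simpa [hjdef] using h))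
            have := k.isLt
            omega
        rw [← hz1x]; exact hstep
      · -- d ≥ 2 : two transforms with a generic parameter t
        have hk2' : n - (d + 1) + 2 < n := by omega
        set k2 : Fin n := ⟨n - (d + 1) + 2, hk2'⟩ with hk2def
        have hjk2 : j ≠ k2 := by
          intro h; have := congrArg Fin.val h
          simp only [hjdef, hk2def] at this; omega
        have hik2 : i ≠ k2 := by
          intro h; have := congrArg Fin.val h
          simp only [hidef, hk2def] at this; omega
        have hk2tail : n - (d + 1) ≤ (k2 : ℕ) := by simp [hk2def]
        have hzjk2 : z j ≠ z k2 := fun h => hjk2 (hinj j k2 hjtail hk2tail h)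
        obtain ⟨t, ht⟩ := Infinite.exists_notMem_finset
          ((Finset.univ.image z) ∪ (Finset.univ.image fun l => x i + z l - z i) ∪
            (Finset.univ.image fun l => z j + z k2 - z l) ∪
            {(x i + z j + z k2 - z i) / 2})
        simp only [Finset.mem_union, Finset.mem_image, Finset.mem_singleton, not_or,
          not_exists, not_and, Finset.mem_univ, forall_const] at ht
        obtain ⟨⟨⟨ht1, ht2⟩, ht3⟩, ht4⟩ := ht
        have ht1' : ∀ l, t ≠ z l := fun l h => ht1 l h.symm
        have ht2' : ∀ l, z i + t - x i ≠ z l := fun l h => ht2 l (by linear_combination -h)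
        have ht3' : ∀ l, z j + z k2 - t ≠ z l := fun l h => ht3 l (by linear_combination h)
        have ht4' : z i + t - x i ≠ z j + z k2 - t := fun h =>
          ht4 (by linear_combination h / 2)
        set z1 := Function.update (Function.update z j t) k2 (z j + z k2 - t) with hz1
        have hr1 : Reach z z1 := reach_step z j k2 hjk2 hzjk2 t
        have e1i : z1 i = z i := by
          rw [hz1, Function.update_of_ne hik2, Function.update_of_ne hij]
        have e1j : z1 j = t := by
          rw [hz1, Function.update_of_ne hjk2, Function.update_self]
        have hz1ij : z1 i ≠ z1 j := by rw [e1i, e1j]; exact (ht1' i).symm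
        have hr2 := reach_step z1 i j hij hz1ij (x i)
        set z2 := Function.update (Function.update z1 i (x i)) j (z1 i + z1 j - x i)
          with hz2
        have e2i : z2 i = x i := by
          rw [hz2, Function.update_of_ne hij, Function.update_self]
        have e2j : z2 j = z i + t - x i := by
          rw [hz2, Function.update_self, e1i, e1j]
        have e2k2 : z2 k2 = z j + z k2 - t := by
          rw [hz2, Function.update_of_ne (Ne.symm hjk2),
            Function.update_of_ne (Ne.symm hik2), hz1, Function.update_self]
        have e2o : ∀ l : Fin n, l ≠ i → l ≠ j → l ≠ k2 → z2 l = z l := by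
          intro l h1 h2 h3
          rw [hz2, Function.update_of_ne h2, Function.update_of_ne h1, hz1,
            Function.update_of_ne h3, Function.update_of_ne h2]
        have hsum2 : ∑ l, z2 l = ∑ l, x l := by
          rw [hz2, sum_update2 z1 hij (x i), hz1, sum_update2 z hjk2 t]
          exact hsum
        refine reach_trans (reach_trans hr1 hr2) (ih (by omega) z2 ?_ hsum2 ?_)
        · -- prefix
          intro k hk
          by_cases hki : k = i
          · rw [hki, e2i]
          · have hkival : (k : ℕ) ≠ n - (d + 1) := by
              intro h; exact hki (Fin.ext (by simpa [hidef] using h))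
            have hkj : k ≠ j := by
              intro h
              have := congrArg Fin.val h
              simp only [hjdef] at this
              omega
            have hkk2 : k ≠ k2 := by
              intro h
              have := congrArg Fin.val h
              simp only [hk2def] at this
              omega
            rw [e2o k hki hkj hkk2]
            exact hpre k (by omega)
        · -- injectivity on the new tail
          intro a b ha hb hab
          have hai : a ≠ i := by
            intro h; have := congrArg Fin.val h; simp only [hidef] at this; omega
          have hbi : b ≠ i := by
            intro h; have := congrArg Fin.val h; simp only [hidef] at this; omega
          by_cases haj : a = j
          · by_cases hbj : b = j
            · rw [haj, hbj]
            · by_cases hbk2 : b = k2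
              · rw [haj, hbk2, e2j, e2k2] at hab
                exact absurd hab ht4'
              · rw [haj, e2j, e2o b hbi hbj hbk2] at hab
                exact absurd hab (ht2' b)
          · by_cases hak2 : a = k2
            · by_cases hbj : b = j
              · rw [hak2, hbj, e2k2, e2j] at hab
                exact absurd hab.symm ht4'
              · by_cases hbk2 : b = k2
                · rw [hak2, hbk2]
                · rw [hak2, e2k2, e2o b hbi hbj hbk2] at hab
                  exact absurd hab (ht3' b)
            · by_cases hbj : b = j
              · rw [hbj, e2j, e2o a hai haj hak2] at hab
                exact absurd hab.symm (ht2' a)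
              · by_cases hbk2 : b = k2
                · rw [hbk2, e2k2, e2o a hai haj hak2] at hab
                  exact absurd hab.symm (ht3' a)
                · rw [e2o a hai haj hak2, e2o b hbi hbj hbk2] at hab
                  exact hinj a b (by omega) (by omega) hab


lemma clex_trans {a b c : ℂ} (h1 : CLexLe a b) (h2 : CLexLe b c) : CLexLe a c := by
  rcases h1 with h1 | ⟨h1, h1'⟩ <;> rcases h2 with h2 | ⟨h2, h2'⟩
  · exact Or.inl (h1.trans h2)
  · exact Or.inl (h2 ▸ h1)
  · exact Or.inl (h1 ▸ h2)
  · exact Or.inr ⟨h1.trans h2, h1'.trans h2'⟩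

lemma eq_const_of_maj {n : ℕ} (x y : Fin n → ℂ) (hx : NonIncreasing x)
    (hxy : Maj x y) (hc : ∀ p q : Fin n, y p = y q) : x = y := by
  rcases Nat.eq_zero_or_pos n with hn0 | hn
  · funext k
    exact absurd k.isLt (by omega)
  · set i0 : Fin n := ⟨0, hn⟩ with hi0
    set c : ℂ := y i0 with hcdef
    have hyc : ∀ k, y k = c := fun k => hc k i0
    by_cases hn1 : n = 1
    · subst hn1
      funext k
      have hk : k = i0 := Subsingleton.elim k i0
      have := hxy.2
      rw [Fin.sum_univ_one, Fin.sum_univ_one] at this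
      rw [hk]
      exact this
    · have hn2 : 2 ≤ n := by omega
      have hfilter : Finset.univ.filter (fun i : Fin n => (i : ℕ) < 1) = {i0} := by
        ext a
        simp only [Finset.mem_filter, Finset.mem_univ, true_and, Finset.mem_singleton,
          Fin.ext_iff, hi0]
        omega
      have h0 := hxy.1 1 le_rfl (by omega)
      rw [partialSum, partialSum, hfilter, Finset.sum_singleton, Finset.sum_singleton] at h0
      have hall : ∀ k, CLexLe (x k) c :=
        fun k => clex_trans (hx i0 k (by simp [Fin.le_def, hi0])) h0
      have hre_le : ∀ k, (x k).re ≤ c.re :=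
        fun k => (hall k).elim le_of_lt (fun h => h.1.le)
      have hsums : ∑ k, x k = ∑ _k : Fin n, c :=
        hxy.2.trans (Finset.sum_congr rfl fun k _ => hyc k)
      have hre_sum : ∑ k, (x k).re = ∑ _k : Fin n, c.re := by
        have := congrArg Complex.re hsums
        rwa [Complex.re_sum, Complex.re_sum] at this
      have hre_eq : ∀ k ∈ Finset.univ, (x k).re = c.re :=
        (Finset.sum_eq_sum_iff_of_le (fun k _ => hre_le k)).mp hre_sum
      have him_le : ∀ k, (x k).im ≤ c.im := by
        intro k
        rcases hall k with h | h
        · exact absurd (hre_eq k (Finset.mem_univ k)) (ne_of_lt h)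
        · exact h.2
      have him_sum : ∑ k, (x k).im = ∑ _k : Fin n, c.im := by
        have := congrArg Complex.im hsums
        rwa [Complex.im_sum, Complex.im_sum] at this
      have him_eq : ∀ k ∈ Finset.univ, (x k).im = c.im :=
        (Finset.sum_eq_sum_iff_of_le (fun k _ => him_le k)).mp him_sum
      funext k
      rw [hyc k]
      exact Complex.ext (hre_eq k (Finset.mem_univ k)) (him_eq k (Finset.mem_univ k))


/-- If `x` is majorized by `y` (both non-increasingly sorted), then `x` can be
obtained from `y` by a finite number of affine T-transformations. -/
theorem maj_iff_finite_affine_T_transforms {n : ℕ} (x y : Fin n → ℂ)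
    (hx : NonIncreasing x) (hy : NonIncreasing y) (hxy : Maj x y) :
    ∃ Ts : List (Matrix (Fin n) (Fin n) ℂ),
      (∀ T ∈ Ts, IsAffineTTransform T) ∧ x = Matrix.vecMul y Ts.prod := by
  by_cases hnc : ∃ p q : Fin n, y p ≠ y q
  · obtain ⟨p, q, hpq⟩ := hnc
    have hpq' : p ≠ q := fun h => hpq (h ▸ rfl)
    have hinj0 : ∀ a ∈ ({p, q} : Finset (Fin n)), ∀ b ∈ ({p, q} : Finset (Fin n)),
        y a = y b → a = b := by
      intro a ha b hb hab
      simp only [Finset.mem_insert, Finset.mem_singleton] at ha hb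
      rcases ha with rfl | rfl <;> rcases hb with rfl | rfl
      · rfl
      · exact absurd hab hpq
      · exact absurd hab.symm hpq
      · rfl
    have hcard : 2 ≤ ({p, q} : Finset (Fin n)).card := by
      rw [Finset.card_insert_of_notMem (by simp [hpq']), Finset.card_singleton]
    obtain ⟨z', hr, hinj, hsum⟩ :=
      distinctify_aux (({p, q} : Finset (Fin n))ᶜ.card) y {p, q} rfl hcard hinj0
    have hfix : Reach z' x := by
      refine fixTail x n le_rfl z' (fun k hk => absurd hk (by omega))
        (hsum.trans hxy.2.symm) (fun a b _ _ h => hinj h)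
    exact reach_trans hr hfix
  · push_neg at hnc
    have hxy' : x = y := eq_const_of_maj x y hx hxy hnc
    rw [hxy']
    exact reach_refl y
end

section
/- Let x, y : Fin n → ℂ both be non-increasing with respect to the lexicographic order on ℂ, and suppose x is majorized by y (x ≺ y). Then there exists a generalized doubly stochastic matrix P : Matrix (Fin n) (Fin n) ℂ such that the row vector x equals y multiplied on the right by P, i.e., x = y ᵥ* P. -/
/-- A matrix is generalized doubly stochastic if every row sums to 1 and every
column sums to 1 (entries may be arbitrary complex numbers). -/
def IsGenDoublyStochastic {n : ℕ} (A : Matrix (Fin n) (Fin n) ℂ) : Prop :=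
  (∀ i, ∑ j, A i j = 1) ∧ (∀ j, ∑ i, A i j = 1)

open Matrix

namespace CLexLe

theorem iff_toLex {a b : ℂ} : CLexLe a b ↔ toLex (a.re, a.im) ≤ toLex (b.re, b.im) :=
  (Prod.Lex.toLex_le_toLex (x := (a.re, a.im)) (y := (b.re, b.im))).symm

theorem refl (a : ℂ) : CLexLe a a :=
  iff_toLex.2 le_rfl

theorem trans {a b c : ℂ} (hab : CLexLe a b) (hbc : CLexLe b c) : CLexLe a c :=
  iff_toLex.2 (le_trans (iff_toLex.1 hab) (iff_toLex.1 hbc))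

theorem antisymm {a b : ℂ} (hab : CLexLe a b) (hba : CLexLe b a) : a = b := by
  have h := congrArg ofLex (le_antisymm (iff_toLex.1 hab) (iff_toLex.1 hba))
  simp only [ofLex_toLex, Prod.mk.injEq] at h
  exact Complex.ext h.1 h.2

theorem sub_left {a b : ℂ} (h : CLexLe a b) (t : ℂ) : CLexLe (t - b) (t - a) := by
  unfold CLexLe at *
  simp only [Complex.sub_re, Complex.sub_im]
  rcases h with h | ⟨hre, him⟩
  · exact Or.inl (by linarith)
  · exact Or.inr ⟨by linarith, by linarith⟩

end CLexLe

section PartialSum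

variable {n : ℕ} (x : Fin n → ℂ)

@[simp]
theorem partialSum_zero : partialSum x 0 = 0 := by
  simp [partialSum]

theorem partialSum_self : partialSum x n = ∑ i, x i := by
  simp [partialSum]

theorem partialSum_succ (k : Fin n) : partialSum x (k + 1) = partialSum x k + x k := by
  have hset : Finset.univ.filter (fun i : Fin n => (i : ℕ) < k + 1) =
      insert k (Finset.univ.filter fun i : Fin n => (i : ℕ) < k) := by
    ext i
    simp only [Finset.mem_filter, Finset.mem_univ, true_and, Finset.mem_insert, Fin.ext_iff]
    omega
  rw [partialSum, hset, Finset.sum_insert (by simp), add_comm, partialSum]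

end PartialSum

theorem Maj.partialSum_le {n : ℕ} {x y : Fin n → ℂ} (h : Maj x y) {k : ℕ} (hk : k ≤ n) :
    CLexLe (partialSum x k) (partialSum y k) := by
  rcases Nat.eq_zero_or_pos k with rfl | hk0
  · simpa using CLexLe.refl 0
  rcases hk.eq_or_lt with rfl | hkn
  · rw [partialSum_self, partialSum_self, h.2]
    exact CLexLe.refl _
  · exact h.1 k hk0 (by omega)

theorem eq_const_of_maj_const {n : ℕ} {x y : Fin n → ℂ} {c : ℂ} (hx : NonIncreasing x)
    (h : Maj x y) (hy : ∀ j, y j = c) (i : Fin n) : x i = c := by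
  obtain ⟨m, rfl⟩ : ∃ m, n = m + 1 := Nat.exists_eq_add_one.2 i.pos
  have hfirst : CLexLe (x 0) c := by
    have hx1 := partialSum_succ x 0
    have hy1 := partialSum_succ y 0
    simp only [Fin.val_zero, zero_add, partialSum_zero] at hx1 hy1
    simpa [hx1, hy1, hy] using h.partialSum_le (k := 1) (by omega)
  have hlast : CLexLe c (x (Fin.last m)) := by
    have hx_total := partialSum_succ x (Fin.last m)
    have hy_total := partialSum_succ y (Fin.last m)
    simp only [Fin.val_last] at hx_total hy_total
    have h_total : partialSum x (m + 1) = partialSum y (m + 1) := by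
      rw [partialSum_self, partialSum_self, h.2]
    have hy_last : partialSum y (m + 1) - partialSum y m = c := by
      rw [hy_total, add_sub_cancel_left, hy]
    have hx_last : partialSum y (m + 1) - partialSum x m = x (Fin.last m) := by
      rw [← h_total, hx_total, add_sub_cancel_left]
    simpa only [hy_last, hx_last] using
      (h.partialSum_le (k := m) (by omega)).sub_left (partialSum y (m + 1))
  exact CLexLe.antisymm (hx 0 i (Fin.zero_le i) |>.trans hfirst)
    (hlast.trans (hx i (Fin.last m) (Fin.le_last i)))

theorem isGenDoublyStochastic_one {n : ℕ} : IsGenDoublyStochastic (1 : Matrix (Fin n) (Fin n) ℂ) :=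
  ⟨fun i => by simp [one_apply], fun j => by simp [one_apply]⟩

noncomputable def uniformAddVecMulVec {n : ℕ} (a b : Fin n → ℂ) : Matrix (Fin n) (Fin n) ℂ :=
  of (fun _ _ => (n : ℂ)⁻¹) + vecMulVec a b

section UniformAddVecMulVec

variable {n : ℕ} {a b : Fin n → ℂ}

theorem isGenDoublyStochastic_uniformAddVecMulVec (ha : ∑ i, a i = 0) (hb : ∑ j, b j = 0) :
    IsGenDoublyStochastic (uniformAddVecMulVec a b) := by
  have hsum_inv (k : Fin n) : ∑ _ : Fin n, (n : ℂ)⁻¹ = 1 := by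
    simp [Nat.cast_ne_zero.2 (Fin.pos k).ne']
  refine ⟨fun i => ?_, fun j => ?_⟩
  · simp [uniformAddVecMulVec, vecMulVec_apply, Finset.sum_add_distrib, ← Finset.mul_sum, hb,
      hsum_inv i]
  · simp [uniformAddVecMulVec, vecMulVec_apply, Finset.sum_add_distrib, ← Finset.sum_mul, ha,
      hsum_inv j]

theorem vecMul_uniformAddVecMulVec (y : Fin n → ℂ) :
    y ᵥ* uniformAddVecMulVec a b = fun j => (∑ i, y i) / n + (y ⬝ᵥ a) * b j := by
  rw [uniformAddVecMulVec, vecMul_add, vecMul_vecMulVec]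
  ext j
  simp [vecMul, dotProduct, ← Finset.sum_mul, div_eq_mul_inv]

end UniformAddVecMulVec

theorem exists_isGenDoublyStochastic_vecMul_eq_of_ne {n : ℕ} {x y : Fin n → ℂ}
    (hsum : ∑ i, x i = ∑ i, y i) {p q : Fin n} (hpq : y p ≠ y q) :
    ∃ P : Matrix (Fin n) (Fin n) ℂ, IsGenDoublyStochastic P ∧ x = y ᵥ* P := by
  set a : Fin n → ℂ := (y p - y q)⁻¹ • (Pi.single p 1 - Pi.single q 1)
  set b : Fin n → ℂ := fun j => x j - (∑ i, x i) / n
  have ha : ∑ i, a i = 0 := by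
    simp [a, ← Finset.mul_sum]
  have hya : y ⬝ᵥ a = 1 := by
    simp [a, dotProduct_sub, inv_mul_cancel₀ (sub_ne_zero.2 hpq)]
  have hb : ∑ j, b j = 0 := by
    have : (n : ℂ) ≠ 0 := Nat.cast_ne_zero.2 (Fin.pos p).ne'
    simp [b, Finset.sum_sub_distrib, mul_div_cancel₀ _ this]
  refine ⟨uniformAddVecMulVec a b, isGenDoublyStochastic_uniformAddVecMulVec ha hb, ?_⟩
  rw [vecMul_uniformAddVecMulVec, hya, ← hsum]
  ext j
  simp [b]

theorem maj_exists_genDoublyStochastic_general {n : ℕ} (x y : Fin n → ℂ)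
    (hx : NonIncreasing x) (hxy : Maj x y) :
    ∃ P : Matrix (Fin n) (Fin n) ℂ, IsGenDoublyStochastic P ∧ x = Matrix.vecMul y P := by
  by_cases hne : ∃ p q, y p ≠ y q
  · obtain ⟨p, q, hpq⟩ := hne
    exact exists_isGenDoublyStochastic_vecMul_eq_of_ne hxy.2 hpq
  · push Not at hne
    refine ⟨1, isGenDoublyStochastic_one, ?_⟩
    ext i
    rw [vecMul_one]
    exact eq_const_of_maj_const hx hxy (fun j => hne j i) i

/-- If `x` is majorized by `y` (both non-increasingly sorted), then there exists
a generalized doubly stochastic matrix `P` with `x = y ᵥ* P`. -/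
theorem maj_exists_genDoublyStochastic {n : ℕ} (x y : Fin n → ℂ)
    (hx : NonIncreasing x) (hy : NonIncreasing y) (hxy : Maj x y) :
    ∃ P : Matrix (Fin n) (Fin n) ℂ, IsGenDoublyStochastic P ∧ x = Matrix.vecMul y P :=
  maj_exists_genDoublyStochastic_general x y hx hxy
end

section
/- Let n ≥ 1 and 1 ≤ κ ≤ n, let c : ℕ → ℂ with c(κ) ≠ 0, and let M be the n × n complex matrix with entries M i j = c(j − i) when j − i ≥ κ and M i j = 0 otherwise. Then for every natural number p, the rank of M^p equals n − min(n, p·κ); in particular, M^p = 0 if and only if p·κ ≥ n, i.e., if and only if p ≥ ⌈n/κ⌉. -/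
open Matrix


/-- Rank of powers of a strictly upper-triangular Toeplitz matrix whose first
nonzero super-diagonal is at offset `κ`: `rank (M^p) = n - min n (p·κ)`;
in particular `M^p = 0` iff `p·κ ≥ n`, i.e. iff `p ≥ ⌈n/κ⌉`. -/
theorem rank_pow_toeplitz_nilpotent (n κ : ℕ) (hn : 1 ≤ n) (hκ1 : 1 ≤ κ) (hκn : κ ≤ n)
    (c : ℕ → ℂ) (hc : c κ ≠ 0)
    (M : Matrix (Fin n) (Fin n) ℂ)
    (hM : ∀ i j : Fin n, M i j = if (i : ℕ) + κ ≤ (j : ℕ) then c ((j : ℕ) - (i : ℕ)) else 0) :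
    ∀ p : ℕ, (M ^ p).rank = n - min n (p * κ) ∧
      (M ^ p = 0 ↔ n ≤ p * κ) ∧
      (M ^ p = 0 ↔ (n + κ - 1) / κ ≤ p) := by
  -- Key structural lemma about entries of M^p
  have key : ∀ p : ℕ, (∀ i j : Fin n, (j : ℕ) < (i : ℕ) + p * κ → (M ^ p) i j = 0) ∧
      (∀ i j : Fin n, (j : ℕ) = (i : ℕ) + p * κ → (M ^ p) i j = c κ ^ p) := by
    intro p
    induction p with
    | zero =>
      constructor
      · intro i j hij
        simp only [pow_zero, Matrix.one_apply]
        rw [if_neg]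
        intro h; subst h; omega
      · intro i j hij
        simp only [pow_zero, Matrix.one_apply]
        rw [if_pos]
        exact Fin.ext (by omega)
    | succ p ih =>
      obtain ⟨ih0, ih1⟩ := ih
      constructor
      · intro i j hij
        rw [pow_succ', Matrix.mul_apply]
        apply Finset.sum_eq_zero
        intro k _
        by_cases hk : (i : ℕ) + κ ≤ (k : ℕ)
        · have : (j : ℕ) < (k : ℕ) + p * κ := by
            have := hij
            simp only [Nat.succ_mul] at this
            omega
          rw [ih0 k j this, mul_zero]
        · rw [hM i k, if_neg hk, zero_mul]
      · intro i j hij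
        rw [pow_succ', Matrix.mul_apply]
        have hik : (i : ℕ) + κ < n := by
          have hj := j.isLt
          have : (j : ℕ) = (i : ℕ) + κ + p * κ := by
            rw [hij, Nat.succ_mul]; ring
          omega
        set k0 : Fin n := ⟨(i : ℕ) + κ, hik⟩ with hk0
        rw [Finset.sum_eq_single k0]
        · rw [hM i k0]
          have : (i : ℕ) + κ ≤ (k0 : ℕ) := le_refl _
          rw [if_pos this]
          have h1 : ((k0 : ℕ) - (i : ℕ)) = κ := by simp [hk0]
          rw [h1]
          rw [ih1 k0 j (by simp only [hk0]; rw [hij, Nat.succ_mul]; ring)]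
          rw [pow_succ]; ring
        · intro k _ hk
          by_cases hik2 : (i : ℕ) + κ ≤ (k : ℕ)
          · have hkne : (i : ℕ) + κ < (k : ℕ) := by
              rcases lt_or_eq_of_le hik2 with h | h
              · exact h
              · exact absurd (Fin.ext h.symm) hk
            have : (j : ℕ) < (k : ℕ) + p * κ := by
              rw [hij, Nat.succ_mul]; omega
            rw [ih0 k j this, mul_zero]
          · rw [hM i k, if_neg hik2, zero_mul]
        · intro h
          exact absurd (Finset.mem_univ k0) h
  intro p
  obtain ⟨hzero, hdiag⟩ := key p
  set m := p * κ with hm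
  -- The iff statements
  have hiff1 : M ^ p = 0 ↔ n ≤ m := by
    constructor
    · intro h
      by_contra hlt
      push_neg at hlt
      have h0n : (0 : ℕ) < n := hn
      have hmn : m < n := hlt
      have := hdiag ⟨0, h0n⟩ ⟨m, hmn⟩ (by simp)
      rw [h] at this
      simp only [Matrix.zero_apply] at this
      exact pow_ne_zero p hc this.symm
    · intro h
      ext i j
      simp only [Matrix.zero_apply]
      apply hzero
      have := j.isLt
      omega
  have hiff2 : n ≤ m ↔ (n + κ - 1) / κ ≤ p := by
    rw [Nat.div_le_iff_le_mul_add_pred hκ1]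
    have : κ * p = m := by rw [hm]; ring
    omega
  refine ⟨?_, hiff1, hiff1.trans hiff2⟩
  -- Rank computation
  by_cases hcase : n ≤ m
  · rw [hiff1.mpr hcase, Matrix.rank_zero]
    omega
  push_neg at hcase
  have hr : min n m = m := by omega
  rw [hr]
  set r := n - m with hrdef
  have hrn : ∀ k : Fin r, (k : ℕ) < n := fun k => by have := k.isLt; omega
  have hgn : ∀ k : Fin r, (k : ℕ) + m < n := fun k => by have := k.isLt; omega
  set f : Fin r → Fin n := fun k => ⟨k, hrn k⟩ with hf
  set g : Fin r → Fin n := fun k => ⟨(k : ℕ) + m, hgn k⟩ with hg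
  set P : Matrix (Fin n) (Fin r) ℂ := fun i k => if i = f k then 1 else 0 with hP
  set Q : Matrix (Fin n) (Fin r) ℂ := fun j k => if j = g k then 1 else 0 with hQ
  have hPtN : ∀ (A : Matrix (Fin n) (Fin n) ℂ) (k : Fin r) (j : Fin n),
      (Pᵀ * A) k j = A (f k) j := by
    intro A k j
    rw [Matrix.mul_apply]
    rw [Finset.sum_eq_single (f k)]
    · rw [Matrix.transpose_apply]
      simp only [hP, if_pos rfl, one_mul]
    · intro b _ hb
      rw [Matrix.transpose_apply]
      simp only [hP]
      rw [if_neg hb, zero_mul]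
    · intro h; exact absurd (Finset.mem_univ _) h
  -- Upper bound: M^p = P * (Pᵀ * M^p)
  have hfact : M ^ p = P * (Pᵀ * (M ^ p)) := by
    ext i j
    rw [Matrix.mul_apply]
    by_cases hi : (i : ℕ) < r
    · have hsum : ∀ k : Fin r, P i k * (Pᵀ * (M ^ p)) k j
          = if k = (⟨(i : ℕ), hi⟩ : Fin r) then (M ^ p) i j else 0 := by
        intro k
        rw [hPtN]
        by_cases hik : i = f k
        · have hk : k = (⟨(i : ℕ), hi⟩ : Fin r) :=
            Fin.ext (congrArg Fin.val hik).symm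
          rw [if_pos hk]
          simp only [hP]
          rw [if_pos hik, one_mul, ← hik]
        · rw [if_neg ?_]
          · simp only [hP]
            rw [if_neg hik, zero_mul]
          · intro h
            apply hik
            subst h
            exact Fin.ext rfl
      rw [Finset.sum_congr rfl (fun k _ => hsum k), Finset.sum_ite_eq']
      rw [if_pos (Finset.mem_univ _)]
    · -- row i is zero
      have hrow : (M ^ p) i j = 0 := by
        apply hzero
        have := j.isLt
        omega
      rw [hrow]
      refine (Finset.sum_eq_zero ?_).symm
      intro k _
      simp only [hP]
      rw [if_neg, zero_mul]
      intro h
      rw [h] at hi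
      simp only [hf] at hi
      exact absurd k.isLt (by omega)
  have hupper : (M ^ p).rank ≤ r := by
    calc (M ^ p).rank = (P * (Pᵀ * (M ^ p))).rank := by rw [← hfact]
    _ ≤ (Pᵀ * (M ^ p)).rank := Matrix.rank_mul_le_right _ _
    _ ≤ Fintype.card (Fin r) := Matrix.rank_le_card_height _
    _ = r := Fintype.card_fin r
  -- Lower bound: B = Pᵀ * M^p * Q is upper triangular with nonzero diagonal
  set B : Matrix (Fin r) (Fin r) ℂ := Pᵀ * (M ^ p) * Q with hB
  have hBentry : ∀ k l : Fin r, B k l = (M ^ p) (f k) (g l) := by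
    intro k l
    rw [hB, Matrix.mul_apply]
    rw [Finset.sum_eq_single (g l)]
    · simp only [hQ, if_pos rfl, mul_one]
      rw [hPtN]
    · intro b _ hb
      simp only [hQ]
      rw [if_neg hb, mul_zero]
    · intro h; exact absurd (Finset.mem_univ _) h
  have hBtri : B.BlockTriangular id := by
    intro k l hkl
    rw [hBentry]
    apply hzero
    simp only [hf, hg]
    simp only [id_eq] at hkl
    have : (l : ℕ) < (k : ℕ) := hkl
    omega
  have hBdiag : ∀ k : Fin r, B k k = c κ ^ p := by
    intro k
    rw [hBentry]
    apply hdiag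
    simp [hf, hg]
  have hBdet : B.det ≠ 0 := by
    rw [Matrix.det_of_upperTriangular hBtri]
    rw [Finset.prod_congr rfl (fun k _ => hBdiag k), Finset.prod_const]
    simp only [Finset.card_univ, Fintype.card_fin]
    exact pow_ne_zero _ (pow_ne_zero _ hc)
  have hBunit : IsUnit B := by
    rw [Matrix.isUnit_iff_isUnit_det]
    exact isUnit_iff_ne_zero.mpr hBdet
  have hlower : r ≤ (M ^ p).rank := by
    calc (r : ℕ) = Fintype.card (Fin r) := (Fintype.card_fin r).symm
    _ = B.rank := (Matrix.rank_of_isUnit B hBunit).symm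
    _ ≤ (Pᵀ * (M ^ p)).rank := by rw [hB]; exact Matrix.rank_mul_le_left _ _
    _ ≤ (M ^ p).rank := Matrix.rank_mul_le_right _ _
  omega
end

section
/- Let n ≥ 1 and 1 ≤ κ ≤ n, let c : ℕ → ℂ with c(κ) ≠ 0, and let M be the n × n complex matrix with entries M i j = c(j − i) when j − i ≥ κ and M i j = 0 otherwise. Set s = ⌈n/κ⌉ and ℓ = n + κ − κ·s. Then M is similar to the block-diagonal nilpotent matrix consisting of exactly κ nilpotent Jordan blocks: ℓ blocks J_s(0) of size s and κ − ℓ blocks J_{s−1}(0) of size s − 1 (note ℓ·s + (κ−ℓ)·(s−1) = n). That is, there is a bijective reindexing of Fin n by the disjoint union of the block index sets and an invertible n × n matrix P such that M = P * D * P⁻¹, where D is the corresponding block-diagonal matrix of nilpotent Jordan blocks. -/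
/-- The `m × m` Jordan block with eigenvalue `lam`: `lam` on the diagonal, `1` on
the first super-diagonal, `0` elsewhere. -/
def jordanBlock (m : ℕ) (lam : ℂ) : Matrix (Fin m) (Fin m) ℂ :=
  Matrix.of fun i j =>
    if (i : ℕ) = (j : ℕ) then lam else if (i : ℕ) + 1 = (j : ℕ) then 1 else 0

/-- The Jordan structure of a strictly upper-triangular Toeplitz matrix whose
first nonzero super-diagonal is at offset `κ`: with `s = ⌈n/κ⌉` and
`ℓ = n + κ - κ·s`, the matrix is similar to a block-diagonal nilpotent matrix
with `ℓ` Jordan blocks `J_s(0)` and `κ - ℓ` Jordan blocks `J_{s-1}(0)`. -/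
theorem toeplitz_nilpotent_jordan_form (n κ : ℕ) (hn : 1 ≤ n) (hκ1 : 1 ≤ κ) (hκn : κ ≤ n)
    (c : ℕ → ℂ) (hc : c κ ≠ 0)
    (M : Matrix (Fin n) (Fin n) ℂ)
    (hM : ∀ i j : Fin n, M i j = if (i : ℕ) + κ ≤ (j : ℕ) then c ((j : ℕ) - (i : ℕ)) else 0)
    (s ℓ : ℕ) (hs : s = (n + κ - 1) / κ) (hℓ : ℓ = n + κ - κ * s)
    (blockSize : Fin κ → ℕ) (hbs : ∀ i : Fin κ, blockSize i = if (i : ℕ) < ℓ then s else s - 1) :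
    ℓ * s + (κ - ℓ) * (s - 1) = n ∧
    ∃ (e : (Σ i : Fin κ, Fin (blockSize i)) ≃ Fin n) (P : Matrix (Fin n) (Fin n) ℂ),
      IsUnit P ∧
      M = P * (Matrix.reindex e e
        (Matrix.blockDiagonal' (fun i : Fin κ => jordanBlock (blockSize i) 0))) * P⁻¹ := by
  have hκpos : 0 < κ := hκ1
  -- basic bounds on s and ℓ
  have hs1 : 1 ≤ s := by
    rw [hs]; exact Nat.one_le_div_iff hκpos |>.mpr (by omega)
  have hsu : κ * s ≤ n + κ - 1 := by
    rw [hs, mul_comm]; exact Nat.div_mul_le_self _ _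
  have hsl : n + κ - 1 < κ * (s + 1) := by
    rw [hs]; exact Nat.lt_mul_div_succ _ hκpos
  have hmul : κ * (s + 1) = κ * s + κ := by ring
  have hmul2 : κ * s = κ * (s - 1) + κ := by
    conv_lhs => rw [show s = s - 1 + 1 by omega, Nat.mul_succ]
  have hub : n ≤ κ * s := by omega
  have hlb : κ * (s - 1) < n := by omega
  have hcard : ℓ * s + (κ - ℓ) * (s - 1) = n := by
    have hl1 : 1 ≤ ℓ := by omega
    have hlκ : ℓ ≤ κ := by omega
    have hℓ' : (ℓ : ℤ) = n + κ - κ * s := by omega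
    zify [hlκ, hs1]
    linear_combination hℓ'
  refine ⟨hcard, ?_⟩
  -- the block sizes as a division formula
  have hB : ∀ r : Fin κ, blockSize r = (n - 1 - (r : ℕ)) / κ + 1 := by
    intro r
    have hrκ : (r : ℕ) < κ := r.isLt
    rw [hbs]
    by_cases hr : (r : ℕ) < ℓ
    · rw [if_pos hr]
      have hdiv : (n - 1 - (r : ℕ)) / κ = s - 1 := by
        apply Nat.div_eq_of_lt_le
        · rw [mul_comm]; omega
        · rw [show s - 1 + 1 = s by omega, mul_comm]; omega
      omega
    · rw [if_neg hr]
      rcases (show s = 1 ∨ 2 ≤ s by omega) with hs2 | hs2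
      · exfalso; subst hs2; simp only [mul_one] at hub hmul2; omega
      · have hmul3 : κ * (s - 1) = κ * (s - 2) + κ := by
          conv_lhs => rw [show s - 1 = s - 2 + 1 by omega, Nat.mul_succ]
        have hdiv : (n - 1 - (r : ℕ)) / κ = s - 2 := by
          apply Nat.div_eq_of_lt_le
          · rw [mul_comm]; omega
          · rw [show s - 2 + 1 = s - 1 by omega, mul_comm]; omega
        omega
  have hBpos : ∀ r : Fin κ, 1 ≤ blockSize r := by
    intro r; rw [hB r]; exact Nat.le_add_left 1 _
  -- the key lemma on powers of M
  have key : ∀ (t : ℕ) (i j : Fin n),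
      (((j : ℕ) < (i : ℕ) + t * κ → (M ^ t) i j = 0) ∧
       ((j : ℕ) = (i : ℕ) + t * κ → (M ^ t) i j = c κ ^ t)) := by
    intro t
    induction t with
    | zero =>
      intro i j
      constructor
      · intro h
        rw [pow_zero, Matrix.one_apply_ne (fun hij => by rw [hij] at h; omega)]
      · intro h
        rw [pow_zero, show i = j from Fin.ext (by omega), Matrix.one_apply_eq, pow_zero]
    | succ t ih =>
      intro i j
      have hpow : M ^ (t + 1) = M * M ^ t := by rw [pow_succ']
      have hsucc : (t + 1) * κ = t * κ + κ := by ring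
      constructor
      · intro h
        rw [hpow, Matrix.mul_apply]
        apply Finset.sum_eq_zero
        intro k _
        by_cases hk : (i : ℕ) + κ ≤ (k : ℕ)
        · rw [(ih k j).1 (by omega), mul_zero]
        · rw [hM i k, if_neg hk, zero_mul]
      · intro h
        have hiκ : (i : ℕ) + κ < n := by have := j.isLt; omega
        rw [hpow, Matrix.mul_apply]
        rw [Finset.sum_eq_single (⟨(i : ℕ) + κ, hiκ⟩ : Fin n)]
        · rw [hM, (ih _ j).2 (by simp only [Fin.val_mk]; omega)]
          simp only [Fin.val_mk, if_pos (le_refl ((i : ℕ) + κ))]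
          rw [show (i : ℕ) + κ - (i : ℕ) = κ by omega, pow_succ']
        · intro k _ hne
          by_cases hk : (i : ℕ) + κ ≤ (k : ℕ)
          · have hklt : (i : ℕ) + κ < (k : ℕ) :=
              lt_of_le_of_ne hk (fun hh => hne (Fin.ext hh.symm))
            rw [(ih k j).1 (by omega), mul_zero]
          · rw [hM i k, if_neg hk, zero_mul]
        · intro h'; exact absurd (Finset.mem_univ _) h'
  -- the reindexing equivalence
  have hd1 : ∀ (r : Fin κ) (t : Fin (blockSize r)),
      (blockSize r - 1 - (t : ℕ)) * κ ≤ n - 1 - (r : ℕ) := by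
    intro r t
    have h1 : blockSize r - 1 - (t : ℕ) ≤ (n - 1 - (r : ℕ)) / κ := by
      have := hB r; omega
    calc (blockSize r - 1 - (t : ℕ)) * κ ≤ ((n - 1 - (r : ℕ)) / κ) * κ :=
          Nat.mul_le_mul_right _ h1
      _ ≤ n - 1 - (r : ℕ) := Nat.div_mul_le_self _ _
  let fwd : (Σ r : Fin κ, Fin (blockSize r)) → Fin n := fun σ =>
    ⟨n - 1 - (σ.1 : ℕ) - (blockSize σ.1 - 1 - (σ.2 : ℕ)) * κ, by omega⟩
  let rOf : Fin n → Fin κ := fun m => ⟨(n - 1 - (m : ℕ)) % κ, Nat.mod_lt _ hκpos⟩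
  let bwd : Fin n → (Σ r : Fin κ, Fin (blockSize r)) := fun m =>
    ⟨rOf m, ⟨blockSize (rOf m) - 1 - (n - 1 - (m : ℕ)) / κ,
      Nat.lt_of_le_of_lt (Nat.sub_le _ _) (Nat.sub_lt (hBpos (rOf m)) one_pos)⟩⟩
  have hfwd_val : ∀ (r : Fin κ) (t : Fin (blockSize r)),
      (fwd ⟨r, t⟩ : ℕ) = n - 1 - (r : ℕ) - (blockSize r - 1 - (t : ℕ)) * κ := fun _ _ => rfl
  have hdval : ∀ (r : Fin κ) (t : Fin (blockSize r)),
      n - 1 - (fwd ⟨r, t⟩ : ℕ) = (r : ℕ) + (blockSize r - 1 - (t : ℕ)) * κ := by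
    intro r t
    have := hd1 r t
    have hrn : (r : ℕ) ≤ n - 1 := by have := r.isLt; omega
    rw [hfwd_val]
    omega
  have hleft : ∀ σ, bwd (fwd σ) = σ := by
    rintro ⟨r, t⟩
    have ht : (t : ℕ) ≤ blockSize r - 1 := by have := t.isLt; have := hBpos r; omega
    have hrfst : ((bwd (fwd ⟨r, t⟩)).1 : ℕ) = (r : ℕ) := by
      show (n - 1 - (fwd ⟨r, t⟩ : ℕ)) % κ = (r : ℕ)
      rw [hdval, Nat.add_mul_mod_self_right, Nat.mod_eq_of_lt r.isLt]
    have hsnd : ((bwd (fwd ⟨r, t⟩)).2 : ℕ) = (t : ℕ) := by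
      show blockSize (rOf (fwd ⟨r, t⟩)) - 1 - (n - 1 - (fwd ⟨r, t⟩ : ℕ)) / κ = (t : ℕ)
      have hro : rOf (fwd ⟨r, t⟩) = r := Fin.ext hrfst
      rw [hro, hdval, Nat.add_mul_div_right _ _ hκpos, Nat.div_eq_of_lt r.isLt]
      omega
    exact Sigma.ext (Fin.ext hrfst)
      ((Fin.heq_ext_iff (by rw [Fin.ext hrfst])).mpr hsnd)
  have hright : ∀ m, fwd (bwd m) = m := by
    intro m
    have hmn : (m : ℕ) ≤ n - 1 := by have := m.isLt; omega
    obtain ⟨q, hq⟩ : ∃ q, (n - 1 - (m : ℕ)) / κ = q := ⟨_, rfl⟩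
    obtain ⟨w, hw⟩ : ∃ w, (n - 1 - (m : ℕ)) % κ = w := ⟨_, rfl⟩
    have hdm : q * κ + w = n - 1 - (m : ℕ) := by
      rw [← hq, ← hw, mul_comm]; exact Nat.div_add_mod _ _
    have hwκ : w < κ := by rw [← hw]; exact Nat.mod_lt _ hκpos
    have hrOf : (rOf m : ℕ) = w := hw
    have hq2 : q * κ ≤ n - 1 - w := by omega
    have hq' : q ≤ blockSize (rOf m) - 1 := by
      have h5 := hB (rOf m)
      rw [hrOf] at h5
      have h6 : q ≤ (n - 1 - w) / κ := by rw [Nat.le_div_iff_mul_le hκpos]; exact hq2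
      omega
    apply Fin.ext
    show n - 1 - ((rOf m : ℕ)) -
        (blockSize (rOf m) - 1 - (blockSize (rOf m) - 1 - (n - 1 - (m : ℕ)) / κ)) * κ = (m : ℕ)
    rw [hq, hrOf, show blockSize (rOf m) - 1 - (blockSize (rOf m) - 1 - q) = q by omega]
    omega
  let e : (Σ r : Fin κ, Fin (blockSize r)) ≃ Fin n := ⟨fwd, bwd, hleft, hright⟩
  -- the similarity matrix P
  let u : (Σ r : Fin κ, Fin (blockSize r)) → ℕ := fun σ => blockSize σ.1 - 1 - (σ.2 : ℕ)
  let cl : (Σ r : Fin κ, Fin (blockSize r)) → Fin n := fun σ =>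
    ⟨n - 1 - (σ.1 : ℕ), by omega⟩
  let P : Matrix (Fin n) (Fin n) ℂ := fun i j => (M ^ u (bwd j)) i (cl (bwd j))
  have hrel : ∀ σ, (fwd σ : ℕ) + u σ * κ = (cl σ : ℕ) := by
    rintro ⟨r, t⟩
    have := hd1 r t
    show (fwd ⟨r, t⟩ : ℕ) + (blockSize r - 1 - (t : ℕ)) * κ = n - 1 - (r : ℕ)
    rw [hfwd_val]
    omega
  -- triangularity and invertibility of P
  have hP0 : ∀ i j : Fin n, (j : ℕ) < (i : ℕ) → P i j = 0 := by
    intro i j hij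
    have h1 := hrel (bwd j)
    rw [hright j] at h1
    exact (key (u (bwd j)) i (cl (bwd j))).1 (by omega)
  have hPdiag : ∀ j : Fin n, P j j = c κ ^ u (bwd j) := by
    intro j
    have h1 := hrel (bwd j)
    rw [hright j] at h1
    exact (key (u (bwd j)) j (cl (bwd j))).2 (by omega)
  have htri : P.BlockTriangular (id : Fin n → Fin n) := fun i j hij => hP0 i j hij
  have hdet : IsUnit P.det := by
    rw [Matrix.det_of_upperTriangular htri]
    rw [isUnit_iff_ne_zero]
    rw [Finset.prod_ne_zero_iff]
    intro j _
    rw [hPdiag j]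
    exact pow_ne_zero _ hc
  have hPunit : IsUnit P := (Matrix.isUnit_iff_isUnit_det P).mpr hdet
  haveI : Invertible P := P.invertibleOfIsUnitDet hdet
  -- the core identity
  have main : ∀ (i : Fin n) (σ : Σ r : Fin κ, Fin (blockSize r)),
      (∑ σ' : Σ r : Fin κ, Fin (blockSize r), (M ^ u σ') i (cl σ') *
        (Matrix.blockDiagonal' (fun r : Fin κ => jordanBlock (blockSize r) 0)) σ' σ)
      = (M ^ (u σ + 1)) i (cl σ) := by
    rintro i ⟨r, t⟩
    rcases Nat.eq_zero_or_pos (t : ℕ) with ht0 | ht1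
    · -- t = 0 : both sides vanish
      have hrhs : (M ^ (u ⟨r, t⟩ + 1)) i (cl ⟨r, t⟩) = 0 := by
        apply (key _ _ _).1
        have hu0 : u ⟨r, t⟩ = (n - 1 - (r : ℕ)) / κ := by
          show blockSize r - 1 - (t : ℕ) = _
          have hBr := hB r; omega
        have h2 : n - 1 - (r : ℕ) < κ * ((n - 1 - (r : ℕ)) / κ + 1) :=
          Nat.lt_mul_div_succ _ hκpos
        have h3 : (u ⟨r, t⟩ + 1) * κ = κ * ((n - 1 - (r : ℕ)) / κ + 1) := by
          rw [hu0, mul_comm]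
        show (cl ⟨r, t⟩ : ℕ) < (i : ℕ) + (u ⟨r, t⟩ + 1) * κ
        show n - 1 - (r : ℕ) < (i : ℕ) + (u ⟨r, t⟩ + 1) * κ
        omega
      rw [hrhs]
      apply Finset.sum_eq_zero
      rintro ⟨r', t'⟩ -
      by_cases hr' : r' = r
      · subst hr'
        rw [Matrix.blockDiagonal'_apply_eq]
        have : jordanBlock (blockSize r') 0 t' t = 0 := by
          simp only [jordanBlock, Matrix.of_apply]
          split_ifs with h1 h2
          · rfl
          · omega
          · rfl
        rw [this, mul_zero]
      · rw [Matrix.blockDiagonal'_apply_ne _ _ _ hr', mul_zero]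
    · -- t ≥ 1 : single surviving term
      have htB : (t : ℕ) < blockSize r := t.isLt
      have ht1' : (t : ℕ) - 1 < blockSize r := by omega
      set σ₀ : Σ r : Fin κ, Fin (blockSize r) := ⟨r, ⟨(t : ℕ) - 1, ht1'⟩⟩ with hσ₀
      rw [Finset.sum_eq_single σ₀]
      · have hj : (Matrix.blockDiagonal' (fun r : Fin κ => jordanBlock (blockSize r) 0))
            σ₀ ⟨r, t⟩ = 1 := by
          rw [hσ₀, Matrix.blockDiagonal'_apply_eq]
          simp only [jordanBlock, Matrix.of_apply, Fin.val_mk]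
          rw [if_neg (by omega), if_pos (by omega)]
        rw [hj, mul_one]
        have hu : u σ₀ = u ⟨r, t⟩ + 1 := by
          show blockSize r - 1 - ((t : ℕ) - 1) = blockSize r - 1 - (t : ℕ) + 1
          omega
        rw [hu]
      · rintro ⟨r', t'⟩ - hne
        by_cases hr' : r' = r
        · subst hr'
          rw [Matrix.blockDiagonal'_apply_eq]
          have : jordanBlock (blockSize r') 0 t' t = 0 := by
            simp only [jordanBlock, Matrix.of_apply]
            split_ifs with h1 h2
            · rfl
            · exact absurd (by
                rw [hσ₀]
                exact Sigma.ext rfl (heq_of_eq (Fin.ext (show (t' : ℕ) = (t : ℕ) - 1 by omega)))) hne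
            · rfl
          rw [this, mul_zero]
        · rw [Matrix.blockDiagonal'_apply_ne _ _ _ hr', mul_zero]
      · intro h'; exact absurd (Finset.mem_univ _) h'
  have hmain : P * (Matrix.reindex e e
      (Matrix.blockDiagonal' (fun r : Fin κ => jordanBlock (blockSize r) 0))) = M * P := by
    ext i j
    rw [Matrix.mul_apply, Matrix.mul_apply]
    calc ∑ k, P i k * (Matrix.reindex e e
          (Matrix.blockDiagonal' (fun r : Fin κ => jordanBlock (blockSize r) 0))) k j
        = ∑ σ' : Σ r : Fin κ, Fin (blockSize r), (M ^ u σ') i (cl σ') *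
            (Matrix.blockDiagonal' (fun r : Fin κ => jordanBlock (blockSize r) 0)) σ' (bwd j) := by
          rw [← Equiv.sum_comp e (fun k => P i k * (Matrix.reindex e e
            (Matrix.blockDiagonal' (fun r : Fin κ => jordanBlock (blockSize r) 0))) k j)]
          apply Finset.sum_congr rfl
          intro σ' _
          have h1 : P i (e σ') = (M ^ u σ') i (cl σ') := by
            show (M ^ u (bwd (fwd σ'))) i (cl (bwd (fwd σ'))) = (M ^ u σ') i (cl σ')
            rw [hleft σ']
          rw [h1, Matrix.reindex_apply, Matrix.submatrix_apply]
          congr 2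
          exact e.symm_apply_apply σ'
      _ = (M ^ (u (bwd j) + 1)) i (cl (bwd j)) := main i (bwd j)
      _ = ∑ k, M i k * P k j := by rw [pow_succ', Matrix.mul_apply]
  refine ⟨e, P, hPunit, ?_⟩
  exact ((Matrix.mul_inv_eq_iff_eq_mul_of_invertible P _ M).mpr hmain).symm
end

section
/- Let n ≥ 1, let c : ℕ → ℂ with c(1) ≠ 0, and let A be the n × n upper-triangular Toeplitz matrix with entries A i j = c(j − i) when j ≥ i and A i j = 0 otherwise. Then A is similar to the Jordan block J_n(c(0)): there exists an invertible n × n complex matrix P with A = P * J_n(c(0)) * P⁻¹. -/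
lemma pow_toeplitz_aux {n : ℕ} (c : ℕ → ℂ) (N : Matrix (Fin n) (Fin n) ℂ)
    (hN : ∀ i j : Fin n, N i j = if (i : ℕ) < (j : ℕ) then c ((j : ℕ) - (i : ℕ)) else 0)
    (k : ℕ) :
    ∀ i j : Fin n, ((j : ℕ) < (i : ℕ) + k → (N ^ k) i j = 0) ∧
      ((j : ℕ) = (i : ℕ) + k → (N ^ k) i j = c 1 ^ k) := by
  induction k with
  | zero =>
    intro i j
    refine ⟨fun h => ?_, fun h => ?_⟩
    · rw [pow_zero, Matrix.one_apply_ne]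
      intro e; subst e; omega
    · have : i = j := Fin.ext (by omega)
      subst this
      simp [Matrix.one_apply]
  | succ k ih =>
    intro i j
    rw [pow_succ', Matrix.mul_apply]
    constructor
    · intro h
      apply Finset.sum_eq_zero
      intro l _
      by_cases hl : (i : ℕ) < (l : ℕ)
      · have : (N ^ k) l j = 0 := (ih l j).1 (by omega)
        simp [this]
      · simp [hN i l, hl]
    · intro h
      have hi1 : (i : ℕ) + 1 < n := by omega
      rw [Finset.sum_eq_single (⟨(i : ℕ) + 1, hi1⟩ : Fin n)]
      · have h1 : N i ⟨(i : ℕ) + 1, hi1⟩ = c 1 := by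
          rw [hN]; simp
        have h2 : (N ^ k) ⟨(i : ℕ) + 1, hi1⟩ j = c 1 ^ k := (ih _ j).2 (by simp; omega)
        rw [h1, h2, ← pow_succ']
      · intro l _ hl
        by_cases hli : (i : ℕ) < (l : ℕ)
        · have hll : (i : ℕ) + 1 < (l : ℕ) := by
            rcases Nat.lt_or_ge ((i : ℕ) + 1) (l : ℕ) with h' | h'
            · exact h'
            · exfalso; exact hl (Fin.ext (by simp; omega))
          have : (N ^ k) l j = 0 := (ih l j).1 (by omega)
          simp [this]
        · simp [hN i l, hli]
      · intro h'; exact absurd (Finset.mem_univ _) h'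

/-- An upper-triangular Toeplitz matrix with nonzero first super-diagonal
coefficient is similar to a single Jordan block `J_n(c 0)`. -/
theorem toeplitz_similar_jordanBlock (n : ℕ) (hn : 1 ≤ n)
    (c : ℕ → ℂ) (hc : c 1 ≠ 0)
    (A : Matrix (Fin n) (Fin n) ℂ)
    (hA : ∀ i j : Fin n, A i j = if (i : ℕ) ≤ (j : ℕ) then c ((j : ℕ) - (i : ℕ)) else 0) :
    ∃ P : Matrix (Fin n) (Fin n) ℂ, IsUnit P ∧ A = P * jordanBlock n (c 0) * P⁻¹ := by
  set N : Matrix (Fin n) (Fin n) ℂ := A - c 0 • 1 with hNdef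
  have hN : ∀ i j : Fin n, N i j = if (i : ℕ) < (j : ℕ) then c ((j : ℕ) - (i : ℕ)) else 0 := by
    intro i j
    simp only [hNdef, Matrix.sub_apply, Matrix.smul_apply, Matrix.one_apply, hA i j,
      smul_eq_mul]
    by_cases hij : i = j
    · subst hij; simp
    · have hij' : (i : ℕ) ≠ (j : ℕ) := fun e => hij (Fin.ext e)
      rw [if_neg hij, mul_zero, sub_zero]
      rcases Nat.lt_or_ge (i : ℕ) (j : ℕ) with h' | h'
      · rw [if_pos h'.le, if_pos h']
      · rw [if_neg (by omega), if_neg (by omega)]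
  have key := pow_toeplitz_aux c N hN
  have hlast : n - 1 < n := by omega
  set P : Matrix (Fin n) (Fin n) ℂ :=
    Matrix.of fun i j : Fin n => (N ^ (n - 1 - (j : ℕ))) i ⟨n - 1, hlast⟩ with hPdef
  -- P is upper triangular
  have hPtri : ∀ i j : Fin n, (j : ℕ) < (i : ℕ) → P i j = 0 := by
    intro i j hij
    exact (key (n - 1 - (j : ℕ)) i ⟨n - 1, hlast⟩).1 (by simp; omega)
  have hPdiag : ∀ j : Fin n, P j j = c 1 ^ (n - 1 - (j : ℕ)) := by
    intro j
    exact (key (n - 1 - (j : ℕ)) j ⟨n - 1, hlast⟩).2 (by simp; omega)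
  have hPunit : IsUnit P := by
    rw [Matrix.isUnit_iff_isUnit_det]
    have hdet : P.det = ∏ j : Fin n, P j j := by
      apply Matrix.det_of_upperTriangular
      intro i j hij
      exact hPtri i j hij
    rw [hdet, isUnit_iff_ne_zero]
    apply Finset.prod_ne_zero_iff.2
    intro j _
    rw [hPdiag j]
    exact pow_ne_zero _ hc
  refine ⟨P, hPunit, ?_⟩
  have hAP : A * P = P * jordanBlock n (c 0) := by
    ext i j
    have hNP : (A * P) i j = c 0 * P i j + (N ^ (n - 1 - (j : ℕ) + 1)) i ⟨n - 1, hlast⟩ := by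
      have : A = c 0 • 1 + N := by rw [hNdef]; abel
      rw [this, Matrix.add_mul, Matrix.add_apply, Matrix.smul_mul, Matrix.smul_apply,
        Matrix.one_mul, smul_eq_mul]
      congr 1
      rw [Matrix.mul_apply]
      have : ∀ l : Fin n, N i l * P l j = N i l * (N ^ (n - 1 - (j : ℕ))) l ⟨n - 1, hlast⟩ := by
        intro l; rfl
      simp only [this]
      rw [← Matrix.mul_apply, ← pow_succ']
    rw [hNP, Matrix.mul_apply]
    have hJ : ∀ l : Fin n, P i l * jordanBlock n (c 0) l j =
        P i l * (if (l : ℕ) = (j : ℕ) then c 0 else if (l : ℕ) + 1 = (j : ℕ) then 1 else 0) := by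
      intro l; rfl
    simp only [hJ]
    by_cases hj0 : (j : ℕ) = 0
    · have hz : (N ^ (n - 1 - (j : ℕ) + 1)) i ⟨n - 1, hlast⟩ = 0 := by
        apply (key _ i ⟨n - 1, hlast⟩).1
        simp; omega
      rw [hz, add_zero]
      rw [Finset.sum_eq_single j]
      · rw [if_pos rfl, mul_comm]
      · intro l _ hl
        rw [if_neg (fun e => hl (Fin.ext e)), if_neg (by omega), mul_zero]
      · intro h'; exact absurd (Finset.mem_univ _) h'
    · have hj1 : (j : ℕ) - 1 < n := by omega
      set j' : Fin n := ⟨(j : ℕ) - 1, hj1⟩ with hj'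
      have hsum : ∑ l : Fin n, P i l *
          (if (l : ℕ) = (j : ℕ) then c 0 else if (l : ℕ) + 1 = (j : ℕ) then 1 else 0)
          = P i j * c 0 + P i j' := by
        rw [← Finset.sum_subset (Finset.subset_univ {j, j'})]
        · rw [Finset.sum_pair (by intro e; have := congrArg Fin.val e; simp [hj'] at this; omega)]
          have e1 : ((j : ℕ) = (j : ℕ)) := rfl
          have e2 : ¬((j' : ℕ) = (j : ℕ)) := by simp [hj']; omega
          have e3 : ((j' : ℕ) + 1 = (j : ℕ)) := by simp [hj']; omega
          rw [if_pos e1, if_neg e2, if_pos e3, mul_one]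
        · intro l _ hl
          simp only [Finset.mem_insert, Finset.mem_singleton] at hl
          push_neg at hl
          rw [if_neg (fun e => hl.1 (Fin.ext e)), if_neg (fun e => hl.2 (Fin.ext (by simp [hj']; omega))), mul_zero]
      rw [hsum]
      have hPij' : P i j' = (N ^ (n - 1 - (j : ℕ) + 1)) i ⟨n - 1, hlast⟩ := by
        have he : n - 1 - ((j : ℕ) - 1) = n - 1 - (j : ℕ) + 1 := by omega
        show (N ^ (n - 1 - ((j : ℕ) - 1))) i ⟨n - 1, hlast⟩ = _
        rw [he]
      rw [hPij', mul_comm]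
  have hPinv : P * P⁻¹ = 1 := Matrix.mul_nonsing_inv P ((Matrix.isUnit_iff_isUnit_det P).1 hPunit)
  calc A = A * (P * P⁻¹) := by rw [hPinv, Matrix.mul_one]
    _ = (A * P) * P⁻¹ := by rw [Matrix.mul_assoc]
    _ = P * jordanBlock n (c 0) * P⁻¹ := by rw [hAP]
end

section
/- Let C be an n × n complex matrix such that 1 − Cᴴ C is positive semidefinite. Then 1 − C Cᴴ is positive semidefinite, and C * (1 − Cᴴ C)^{1/2} = (1 − C Cᴴ)^{1/2} * C, where B^{1/2} denotes the (unique) positive semidefinite square root of a positive semidefinite matrix B. -/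
/-!
Writing `X = C Cᴴ`, the identity `1 - X = (1 - X)ᴴ (1 - X) + C (1 - Cᴴ C) Cᴴ` exhibits `1 - C Cᴴ`
as a sum of positive semidefinite matrices. For the square roots, `C` intertwines `1 - Cᴴ C` with
`1 - C Cᴴ`, hence every polynomial in them; since both have finite spectrum, a single Lagrange
interpolation polynomial of `√·` on the union of the two spectra computes both square roots.
-/

open Matrix Polynomial
open scoped ComplexOrder

noncomputable def Matrix.PosSemidef.sqrt {n : Type*} [Fintype n] [DecidableEq n]
    {𝕜 : Type*} [RCLike 𝕜] {A : Matrix n n 𝕜} (hA : A.PosSemidef) : Matrix n n 𝕜 :=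
  hA.1.eigenvectorUnitary.1 * diagonal ((↑) ∘ (√·) ∘ hA.1.eigenvalues) *
    (star hA.1.eigenvectorUnitary : Matrix n n 𝕜)

theorem Polynomial.exists_eqOn_eval_of_finite {F : Type*} [Field F] {s : Set F}
    (hs : s.Finite) (f : F → F) : ∃ p : F[X], s.EqOn p.eval f := by
  classical
  exact ⟨Lagrange.interpolate hs.toFinset id f, fun _ hx =>
    Lagrange.eval_interpolate_at_node f (Set.injOn_id _) (hs.mem_toFinset.mpr hx)⟩

theorem SemiconjBy.aeval {R A : Type*} [CommSemiring R] [Semiring A] [Algebra R A]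
    {c a b : A} (h : SemiconjBy c a b) (p : R[X]) : SemiconjBy c (aeval a p) (aeval b p) := by
  induction p using Polynomial.induction_on' with
  | add p q hp hq => simpa only [map_add] using hp.add_right hq
  | monomial k r =>
    simp only [aeval_monomial]
    exact SemiconjBy.mul_right (Algebra.commute_algebraMap_right r c) (h.pow_right k)

theorem SemiconjBy.cfc_of_finite_spectrum {A : Type*} [Ring A] [StarRing A] [Algebra ℝ A]
    [TopologicalSpace A] [ContinuousFunctionalCalculus ℝ A IsSelfAdjoint] {c a b : A}
    (h : SemiconjBy c a b) (ha : IsSelfAdjoint a) (hb : IsSelfAdjoint b)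
    (ha_fin : (spectrum ℝ a).Finite) (hb_fin : (spectrum ℝ b).Finite) (f : ℝ → ℝ) :
    SemiconjBy c (cfc f a) (cfc f b) := by
  obtain ⟨p, hp⟩ := Polynomial.exists_eqOn_eval_of_finite (ha_fin.union hb_fin) f
  rw [← cfc_congr (hp.mono Set.subset_union_left), ← cfc_congr (hp.mono Set.subset_union_right),
    cfc_polynomial p a, cfc_polynomial p b]
  exact h.aeval p

section

variable {n 𝕜 : Type*} [Fintype n] [DecidableEq n] [RCLike 𝕜]

theorem Matrix.IsHermitian.finite_spectrum {A : Matrix n n 𝕜} (hA : A.IsHermitian) :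
    (spectrum ℝ A).Finite :=
  hA.spectrum_real_eq_range_eigenvalues ▸ Set.finite_range _

theorem Matrix.PosSemidef.sqrt_eq_cfc {A : Matrix n n 𝕜} (hA : A.PosSemidef) :
    hA.sqrt = cfc Real.sqrt A := by
  rw [hA.1.cfc_eq]
  rfl

theorem Matrix.PosSemidef.one_sub_mul_conjTranspose {C : Matrix n n 𝕜}
    (h : (1 - Cᴴ * C).PosSemidef) : (1 - C * Cᴴ).PosSemidef := by
  have key : 1 - C * Cᴴ = (1 - C * Cᴴ)ᴴ * (1 - C * Cᴴ) + C * (1 - Cᴴ * C) * Cᴴ := by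
    simp only [conjTranspose_sub, conjTranspose_one, conjTranspose_mul,
      conjTranspose_conjTranspose]
    noncomm_ring
  rw [key]
  exact (posSemidef_conjTranspose_mul_self _).add (h.mul_mul_conjTranspose_same C)

end

/-- If `1 - Cᴴ C` is positive semidefinite then so is `1 - C Cᴴ`, and
`C * (1 - Cᴴ C)^{1/2} = (1 - C Cᴴ)^{1/2} * C`, where `·^{1/2}` denotes the
positive semidefinite square root. -/
theorem mul_posSemidef_sqrt_comm (n : ℕ) (C : Matrix (Fin n) (Fin n) ℂ)
    (h : (1 - Cᴴ * C).PosSemidef) :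
    (1 - C * Cᴴ).PosSemidef ∧
      ∀ (h₁ : (1 - Cᴴ * C).PosSemidef) (h₂ : (1 - C * Cᴴ).PosSemidef),
        C * h₁.sqrt = h₂.sqrt * C := by
  refine ⟨h.one_sub_mul_conjTranspose, fun h₁ h₂ => ?_⟩
  have hC : SemiconjBy C (1 - Cᴴ * C) (1 - C * Cᴴ) := by
    simp only [SemiconjBy]
    noncomm_ring
  rw [h₁.sqrt_eq_cfc, h₂.sqrt_eq_cfc]
  exact hC.cfc_of_finite_spectrum h₁.1 h₂.1 h₁.1.finite_spectrum h₂.1.finite_spectrum _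
end
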